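/- arXiv:1811.02935 — 6 statements merged into one kernel-verified Lean document; each statement's English description precedes it below -/
import Mathlib

section
/- Let φ : ℝⁿ → ℝ ∪ {∞} be proper lsc convex with minimizers X⋆ ≠ ∅ and minimum φ⋆. Suppose φ satisfies the quadratic growth condition with constants (μ, ν), i.e., φ(x) − φ⋆ ≥ (μ/2) dist(x, X⋆)² for all x with φ(x) ≤ φ⋆ + ν. Then for every ν' > ν, φ satisfies quadratic growth with constants (μ', ν') where μ' = (μ/2) min{1, ν/(ν' − ν)}. -/
set_option linter.unusedVariables false
noncomputable section

/-- Euclidean space ℝⁿ. -/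
abbrev Eucl (n : ℕ) := EuclideanSpace ℝ (Fin n)

/-- A proper extended-real-valued function: not identically +∞ and nowhere -∞. -/
def ProperFun {n : ℕ} (g : Eucl n → EReal) : Prop := (∃ x, g x ≠ ⊤) ∧ ∀ x, g x ≠ ⊥

/-- Convexity for extended-real-valued functions. -/
def ConvexFun {n : ℕ} (g : Eucl n → EReal) : Prop :=
  ∀ x y : Eucl n, ∀ a b : ℝ, 0 ≤ a → 0 ≤ b → a + b = 1 →
    g (a • x + b • y) ≤ (a : EReal) * g x + (b : EReal) * g y

/-- `p` is the proximal point `prox_{γ g}(y)`, i.e. it minimizes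
`w ↦ g w + (1/(2γ))‖w - y‖²`. -/
def IsProx {n : ℕ} (g : Eucl n → EReal) (γ : ℝ) (y p : Eucl n) : Prop :=
  ∀ w, g p + ((1/(2*γ) * ‖p - y‖^2 : ℝ) : EReal) ≤ g w + ((1/(2*γ) * ‖w - y‖^2 : ℝ) : EReal)

/-- The Moreau envelope `g^γ(x) = inf_w { g w + (1/(2γ))‖w - x‖² }`. -/
def moreauEnv {n : ℕ} (g : Eucl n → EReal) (γ : ℝ) (x : Eucl n) : EReal :=
  ⨅ w, g w + ((1/(2*γ) * ‖w - x‖^2 : ℝ) : EReal)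

/-- The convex subdifferential of an extended-real-valued function. -/
def subdiff {n : ℕ} (φ : Eucl n → EReal) (x : Eucl n) : Set (Eucl n) :=
  {v | ∀ z, φ x + ((inner ℝ v (z - x) : ℝ) : EReal) ≤ φ z}

/-- The forward-backward envelope
`φ_γ(x) = inf_w { f x + ⟨∇f x, w - x⟩ + (1/(2γ))‖w - x‖² + g w }`. -/
def fbe {n : ℕ} (f : Eucl n → ℝ) (f' : Eucl n → Eucl n) (g : Eucl n → EReal) (γ : ℝ)
    (x : Eucl n) : EReal :=
  ⨅ w, ((f x + (inner ℝ (f' x) (w - x) : ℝ) + 1/(2*γ) * ‖w - x‖^2 : ℝ) : EReal) + g w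

/-- The distance (in `EReal`, so `⊤` if the set is empty) from `0` to a set of vectors. -/
def distZero {n : ℕ} (S : Set (Eucl n)) : EReal := ⨅ v ∈ S, ((‖v‖ : ℝ) : EReal)

set_option maxHeartbeats 1000000 in
/-- quadratic growth with constants (μ, ν) extends to any larger sublevel set
with constants (μ', ν'), where μ' = (μ/2) min{1, ν/(ν'−ν)}. -/
theorem quadratic_growth_global {n : ℕ} (φ : Eucl n → EReal)
    (hproper : ProperFun φ) (hlsc : LowerSemicontinuous φ) (hconv : ConvexFun φ)
    (Xstar : Set (Eucl n)) (hX : Xstar = {z | ∀ y, φ z ≤ φ y}) (hne : Xstar.Nonempty)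
    (μ ν ν' : ℝ) (hμ : 0 < μ) (hν : 0 < ν) (hν' : ν < ν')
    (hQG : ∀ x, φ x ≤ (⨅ y, φ y) + (ν : EReal) →
      (⨅ y, φ y) + ((μ/2 * (Metric.infDist x Xstar)^2 : ℝ) : EReal) ≤ φ x) :
    ∀ x, φ x ≤ (⨅ y, φ y) + (ν' : EReal) →
      (⨅ y, φ y) + (((μ/2 * min 1 (ν/(ν' - ν)))/2 * (Metric.infDist x Xstar)^2 : ℝ) : EReal)
        ≤ φ x := by
  obtain ⟨z₀, hz₀⟩ := hne
  have hz₀min : ∀ y, φ z₀ ≤ φ y := by rw [hX] at hz₀; exact hz₀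
  have hinf : (⨅ y, φ y) = φ z₀ := le_antisymm (iInf_le _ _) (le_iInf hz₀min)
  obtain ⟨x₀, hx₀⟩ := hproper.1
  have hzt : φ z₀ ≠ ⊤ := fun h => hx₀ (top_le_iff.mp (h ▸ hz₀min x₀))
  obtain ⟨s, hs⟩ : ∃ s : ℝ, φ z₀ = (s : EReal) := by
    lift φ z₀ to ℝ using ⟨hzt, hproper.2 z₀⟩ with s hs
    exact ⟨s, rfl⟩
  have hν'0 : (0:ℝ) < ν' := lt_trans hν hν'
  have hd2 : (0:ℝ) < ν' - ν := by linarith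
  -- value of φ on Xstar
  have hφX : ∀ z ∈ Xstar, φ z = (s : EReal) := by
    intro z hz
    rw [hX] at hz
    exact le_antisymm (hs ▸ hz z₀) (hs ▸ hz₀min z)
  -- Xstar closed
  have hXc : IsClosed Xstar := by
    have : Xstar = φ ⁻¹' (Set.Iic (φ z₀)) := by
      ext z
      rw [hX]
      constructor
      · intro h; exact h z₀
      · intro h y; exact le_trans h (hz₀min y)
    rw [this]
    exact hlsc.isClosed_preimage _
  -- the key constant bound
  set m := min 1 (ν/(ν' - ν)) with hmdef
  have hm0 : 0 ≤ m := le_min (by norm_num) (by positivity)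
  have hm1 : m ≤ 1 := min_le_left _ _
  have hc : (μ/2 * m)/2 ≤ μ/2 * (ν/ν') := by
    rcases min_cases 1 (ν/(ν' - ν)) with ⟨hm, hge⟩ | ⟨hm, hle⟩
    · have h1 : ν' - ν ≤ ν := (one_le_div hd2).mp hge
      have h2 : (1:ℝ)/2 ≤ ν/ν' := by
        rw [div_le_div_iff₀ (by norm_num) hν'0]; linarith
      rw [hmdef, hm]; nlinarith
    · have h1 : ν ≤ ν' - ν := (div_le_one hd2).mp hle.le
      have h2 : ν/(ν' - ν)/2 ≤ ν/ν' := by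
        rw [div_div, div_le_div_iff₀ (by positivity) hν'0]; nlinarith
      rw [hmdef, hm]; nlinarith
  intro x hx
  set d := Metric.infDist x Xstar with hddef
  have hd0 : 0 ≤ d := Metric.infDist_nonneg
  -- φ x is a real number r with s ≤ r ≤ s + ν'
  have hxb : φ x ≤ ((s + ν' : ℝ) : EReal) := by
    rw [hinf, hs] at hx; exact_mod_cast hx
  obtain ⟨r, hr⟩ : ∃ r : ℝ, φ x = (r : EReal) := by
    lift φ x to ℝ using ⟨ne_top_of_le_ne_top (EReal.coe_ne_top _) hxb, hproper.2 x⟩ with r hr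
    exact ⟨r, rfl⟩
  have hsr : s ≤ r := by
    have := hz₀min x; rw [hs, hr] at this; exact_mod_cast this
  have hrν' : r ≤ s + ν' := by rw [hr] at hxb; exact_mod_cast hxb
  -- main real estimate
  have key : (μ/2 * m)/2 * d^2 ≤ r - s := by
    rcases le_or_gt r (s + ν) with hcase | hcase
    · -- already in the small sublevel set
      have h1 := hQG x (by rw [hinf, hs, hr]; exact_mod_cast hcase)
      rw [hinf, hs, hr, ← EReal.coe_add, EReal.coe_le_coe_iff] at h1
      nlinarith
    · -- interpolate
      have hrs : ν < r - s := by linarith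
      have hrs0 : (0:ℝ) < r - s := by linarith
      set t := ν / (r - s) with htdef
      have ht0 : 0 < t := by positivity
      have ht1 : t < 1 := (div_lt_one hrs0).mpr hrs
      have htr : t * (r - s) = ν := div_mul_cancel₀ _ (ne_of_gt hrs0)
      -- nearest point
      obtain ⟨xb, hxbX, hxbd⟩ := hXc.exists_infDist_eq_dist ⟨z₀, (hX ▸ hz₀ : z₀ ∈ Xstar)⟩ x
      set xt := (1 - t) • xb + t • x with hxtdef
      have hφxb : φ xb = (s : EReal) := hφX xb hxbX
      have hconvt := hconv xb x (1 - t) t (by linarith) ht0.le (by ring)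
      rw [hφxb, hr, ← hxtdef] at hconvt
      have hφxt : φ xt ≤ ((s + ν : ℝ) : EReal) := by
        refine le_trans hconvt ?_
        have : ((1 - t : ℝ) : EReal) * (s:EReal) + ((t:ℝ):EReal) * (r:EReal)
            = (((1-t)*s + t*r : ℝ) : EReal) := by
          rw [EReal.coe_add, EReal.coe_mul, EReal.coe_mul]
        rw [this]
        apply EReal.coe_le_coe_iff.mpr
        nlinarith
      have hq := hQG xt (by rw [hinf, hs]; exact le_trans hφxt (by norm_cast))
      rw [hinf, hs, ← EReal.coe_add] at hq
      have hq' : s + μ/2 * (Metric.infDist xt Xstar)^2 ≤ s + ν := by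
        exact_mod_cast le_trans hq hφxt
      set dt := Metric.infDist xt Xstar with hdtdef
      have hdt0 : 0 ≤ dt := Metric.infDist_nonneg
      -- dt ≥ t * d
      have hdist : dist x xt = (1 - t) * d := by
        have hx_xt : x - xt = (1 - t) • (x - xb) := by
          rw [hxtdef]; module
        rw [dist_eq_norm, hx_xt, norm_smul, Real.norm_eq_abs,
          abs_of_nonneg (by linarith : (0:ℝ) ≤ 1 - t), hddef, hxbd, dist_eq_norm]
      have htd : t * d ≤ dt := by
        have := Metric.infDist_le_infDist_add_dist (x := x) (y := xt) (s := Xstar)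
        rw [← hddef, ← hdtdef, hdist] at this
        nlinarith
      -- combine
      have h1 : μ/2 * (t * d)^2 ≤ ν := by
        have := pow_le_pow_left₀ (by positivity) htd 2
        nlinarith
      have h2 : μ/2 * t * d^2 ≤ r - s := by
        have h1' : t * (μ/2 * t * d^2) ≤ t * (r - s) := by
          calc t * (μ/2 * t * d^2) = μ/2 * (t * d)^2 := by ring
            _ ≤ ν := h1
            _ = t * (r - s) := htr.symm
        exact le_of_mul_le_mul_left h1' ht0
      have h4 : ν/ν' ≤ t := by
        rw [htdef]
        exact div_le_div_of_nonneg_left hν.le hrs0 (by linarith)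
      have hA : (μ/2 * m)/2 * d^2 ≤ μ/2 * (ν/ν') * d^2 :=
        mul_le_mul_of_nonneg_right hc (sq_nonneg d)
      have hB : μ/2 * (ν/ν') * d^2 ≤ μ/2 * t * d^2 :=
        mul_le_mul_of_nonneg_right
          (mul_le_mul_of_nonneg_left h4 (by positivity : (0:ℝ) ≤ μ/2)) (sq_nonneg d)
      linarith
  rw [hinf, hs, hr, ← EReal.coe_add, EReal.coe_le_coe_iff]
  linarith
end
end

section
/- Let f : ℝⁿ → ℝ be convex with L_f-Lipschitz gradient, g : ℝⁿ → ℝ ∪ {∞} proper lsc convex, γ > 0, x ∈ ℝⁿ, and x̄ = T_γ(x) := prox_{γg}(x − γ∇f(x)). Then the forward-backward envelope φ_γ(x) := min_w { f(x) + ⟨∇f(x), w − x⟩ + (1/(2γ))‖w − x‖² + g(w) } satisfies φ_γ(x) ≤ φ(x) − (1/(2γ))‖x − x̄‖², where φ = f + g. -/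
set_option linter.unusedVariables false
noncomputable section

/-- `φ_γ(x) ≤ φ(x) − (1/(2γ))‖x − x̄‖²` with `x̄ = T_γ(x)`. -/
theorem fbe_le_cost {n : ℕ} (f : Eucl n → ℝ) (f' : Eucl n → Eucl n)
    (hconvf : ConvexOn ℝ Set.univ f) (hgrad : ∀ x, HasGradientAt f (f' x) x)
    (Lf : ℝ) (hLf : 0 ≤ Lf) (hlip : LipschitzWith (Real.toNNReal Lf) f')
    (g : Eucl n → EReal) (hgp : ProperFun g) (hglsc : LowerSemicontinuous g)
    (hgconv : ConvexFun g)
    (γ : ℝ) (hγ : 0 < γ) (x xbar : Eucl n) (hxbar : IsProx g γ (x - γ • f' x) xbar) :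
    fbe f f' g γ x ≤ ((f x : EReal) + g x) - ((1/(2*γ) * ‖x - xbar‖^2 : ℝ) : EReal) := by
  obtain ⟨⟨w₀, hw₀⟩, hbot⟩ := hgp
  set y : Eucl n := x - γ • f' x with hy
  -- g xbar is finite
  have hxtop : g xbar ≠ ⊤ := by
    intro h
    have h0 : g w₀ = ((g w₀).toReal : EReal) := (EReal.coe_toReal hw₀ (hbot w₀)).symm
    have h1 := hxbar w₀
    rw [h, h0, ← EReal.coe_add] at h1
    have : (⊤ : EReal) ≤ (((g w₀).toReal + 1/(2*γ) * ‖w₀ - y‖^2 : ℝ) : EReal) :=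
      le_trans (le_of_eq (EReal.top_add_coe _).symm) h1
    exact (EReal.coe_ne_top _) (top_le_iff.mp this)
  set r : ℝ := (g xbar).toReal with hrdef
  have hr : g xbar = (r : EReal) := (EReal.coe_toReal hxtop (hbot xbar)).symm
  by_cases hxT : g x = ⊤
  · refine le_top.trans_eq ?_
    rw [hxT]
    rw [EReal.add_top_of_ne_bot (EReal.coe_ne_bot _)]
    exact (EReal.top_sub_coe _).symm
  set s : ℝ := (g x).toReal with hsdef
  have hs : g x = (s : EReal) := (EReal.coe_toReal hxT (hbot x)).symm
  set N : ℝ := ‖x - xbar‖^2 with hN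
  set I : ℝ := inner ℝ (xbar - y) (x - xbar) with hI
  -- key inequality for each t
  have key : ∀ t : ℝ, 0 < t → t ≤ 1 → r - (1/γ) * I - (t/(2*γ)) * N ≤ s := by
    intro t ht ht1
    set wt : Eucl n := (1-t) • xbar + t • x with hwt
    have hconv := hgconv xbar x (1-t) t (by linarith) ht.le (by ring)
    rw [hr, hs] at hconv
    have hconv' : g wt ≤ (((1-t)*r + t*s : ℝ) : EReal) := by
      refine hconv.trans_eq ?_
      rw [← EReal.coe_mul, ← EReal.coe_mul, ← EReal.coe_add]
    have hp := hxbar wt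
    rw [hr] at hp
    have hle : ((r + 1/(2*γ) * ‖xbar - y‖^2 : ℝ) : EReal) ≤
        (((1-t)*r + t*s + 1/(2*γ) * ‖wt - y‖^2 : ℝ) : EReal) := by
      push_cast
      exact_mod_cast hp.trans (add_le_add_left hconv' _)
    have hR : r + 1/(2*γ) * ‖xbar - y‖^2 ≤ (1-t)*r + t*s + 1/(2*γ) * ‖wt - y‖^2 := by
      exact_mod_cast hle
    have hwy : wt - y = (xbar - y) + t • (x - xbar) := by
      rw [hwt]; module
    have hnorm : ‖wt - y‖^2 = ‖xbar - y‖^2 + 2*t*I + t^2*N := by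
      rw [hwy, norm_add_sq_real, real_inner_smul_right, norm_smul]
      rw [hI, hN]
      rw [Real.norm_eq_abs, abs_of_pos ht]
      ring
    rw [hnorm] at hR
    have hsub := sub_nonneg.mpr hR
    have heq : (1-t)*r + t*s + 1/(2*γ) * (‖xbar - y‖^2 + 2*t*I + t^2*N)
        - (r + 1/(2*γ) * ‖xbar - y‖^2) = t * (s - r + (1/γ)*I + (t/(2*γ))*N) := by
      field_simp
      ring
    rw [heq] at hsub
    have h4 : 0 ≤ s - r + (1/γ)*I + (t/(2*γ))*N := (mul_nonneg_iff_of_pos_left ht).mp hsub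
    linarith
  have key0 : r - (1/γ) * I ≤ s := by
    refine le_of_forall_pos_le_add ?_
    intro ε hε
    by_cases hN0 : N = 0
    · have := key 1 one_pos le_rfl
      rw [hN0] at this
      linarith
    · have hNpos : 0 < N := lt_of_le_of_ne (by rw [hN]; positivity) (Ne.symm hN0)
      set t : ℝ := min 1 (2*γ*ε/N) with htdef
      have ht : 0 < t := lt_min one_pos (by positivity)
      have h1 := key t ht (min_le_left _ _)
      have h2 : t ≤ 2*γ*ε/N := min_le_right _ _
      have h3 : (t/(2*γ))*N ≤ ε := by
        rw [div_mul_eq_mul_div, div_le_iff₀ (by positivity)]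
        calc t * N ≤ (2*γ*ε/N) * N := by nlinarith
          _ = ε * (2*γ) := by field_simp
      linarith
  -- translate I
  have hIval : I = γ * inner ℝ (f' x) (x - xbar) - N := by
    rw [hI, hN, hy]
    have h5 : xbar - (x - γ • f' x) = -((x - xbar) - γ • f' x) := by module
    rw [h5, inner_neg_left, inner_sub_left, real_inner_smul_left,
      real_inner_self_eq_norm_sq]
    ring
  -- conclude
  have hbound : fbe f f' g γ x ≤
      ((f x + (inner ℝ (f' x) (xbar - x) : ℝ) + 1/(2*γ) * ‖xbar - x‖^2 : ℝ) : EReal) + g xbar :=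
    iInf_le _ xbar
  rw [hr, ← EReal.coe_add] at hbound
  have hRHS : ((f x : EReal) + g x) - ((1/(2*γ) * ‖x - xbar‖^2 : ℝ) : EReal) =
      ((f x + s - 1/(2*γ) * ‖x - xbar‖^2 : ℝ) : EReal) := by
    rw [hs, ← EReal.coe_add, ← EReal.coe_sub]
  rw [hRHS]
  refine hbound.trans ?_
  rw [EReal.coe_le_coe_iff]
  have hP : (inner ℝ (f' x) (xbar - x) : ℝ) = -(inner ℝ (f' x) (x - xbar) : ℝ) := by
    rw [show xbar - x = -(x - xbar) from by module, inner_neg_right]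
  have hnn : ‖xbar - x‖ = ‖x - xbar‖ := norm_sub_rev _ _
  rw [hP, hnn]
  have hgi : (1/γ) * I = inner ℝ (f' x) (x - xbar) - (1/γ) * N := by
    rw [hIval]; field_simp
  have h2c : 1/(2*γ)*N + 1/(2*γ)*N = (1/γ)*N := by field_simp; ring
  rw [← hN]
  linarith [key0, hgi, h2c]
end
end

section
/- Let f : ℝⁿ → ℝ be convex with L_f-Lipschitz gradient, g proper lsc convex, γ > 0, x̄ = T_γ(x). Then φ(x̄) ≤ φ_γ(x) − ((1 − γL_f)/(2γ))‖x − x̄‖² and φ(x̄) ≥ φ_γ(x) − (1/(2γ))‖x − x̄‖², where φ = f + g and φ_γ is the forward-backward envelope. -/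
set_option linter.unusedVariables false
noncomputable section

lemma curve_deriv {n : ℕ} (f : Eucl n → ℝ) (f' : Eucl n → Eucl n)
    (hgrad : ∀ x, HasGradientAt f (f' x) x) (x v : Eucl n) (t : ℝ) :
    HasDerivAt (fun s : ℝ => f (x + s • v)) (inner ℝ (f' (x + t • v)) v : ℝ) t := by
  have hc : HasDerivAt (fun s : ℝ => x + s • v) v t := by
    simpa using (HasDerivAt.const_add x ((hasDerivAt_id t).smul_const v))
  have h := (hgrad (x + t • v)).hasFDerivAt.comp_hasDerivAt t hc
  simp [InnerProductSpace.toDual_apply_apply] at h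
  exact h

lemma grad_ineq {n : ℕ} (f : Eucl n → ℝ) (f' : Eucl n → Eucl n)
    (hconvf : ConvexOn ℝ Set.univ f) (hgrad : ∀ x, HasGradientAt f (f' x) x)
    (x y : Eucl n) : f x + inner ℝ (f' x) (y - x) ≤ f y := by
  set v := y - x with hv
  have hg : HasDerivAt (fun s : ℝ => f (x + s • v)) (inner ℝ (f' x) v : ℝ) 0 := by
    simpa using curve_deriv f f' hgrad x v 0
  have htend := (hasDerivAt_iff_tendsto_slope.mp hg).mono_left
    (nhdsWithin_mono 0 (by intro t ht; exact ne_of_gt ht : Set.Ioi (0:ℝ) ⊆ {0}ᶜ))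
  have hub : ∀ᶠ t in nhdsWithin (0:ℝ) (Set.Ioi 0),
      slope (fun s : ℝ => f (x + s • v)) 0 t ≤ f y - f x := by
    filter_upwards [Ioo_mem_nhdsGT_of_mem (by norm_num : (0:ℝ) ∈ Set.Ico 0 1)] with t ht
    have h01 : (1 - t) + t = 1 := by ring
    have hxy : x + t • v = (1 - t) • x + t • y := by
      rw [hv]; module
    have hcv := hconvf.2 (Set.mem_univ x) (Set.mem_univ y)
      (by linarith [ht.2] : (0:ℝ) ≤ 1 - t) (le_of_lt ht.1) h01
    have : f (x + t • v) ≤ (1 - t) * f x + t * f y := by rw [hxy]; simpa using hcv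
    have ht0 : 0 < t := ht.1
    have hx0 : x + (0:ℝ) • v = x := by module
    rw [slope_def_field]
    simp only [hx0, sub_zero]
    rw [div_le_iff₀ ht0]
    nlinarith [this]
  have : (inner ℝ (f' x) v : ℝ) ≤ f y - f x :=
    le_of_tendsto htend hub
  linarith

lemma descent {n : ℕ} (f : Eucl n → ℝ) (f' : Eucl n → Eucl n)
    (hgrad : ∀ x, HasGradientAt f (f' x) x)
    (Lf : ℝ) (hLf : 0 ≤ Lf) (hlip : LipschitzWith (Real.toNNReal Lf) f')
    (x y : Eucl n) :
    f y ≤ f x + inner ℝ (f' x) (y - x) + Lf/2 * ‖y - x‖^2 := by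
  set v := y - x with hv
  set q' : ℝ → ℝ := fun t => inner ℝ (f' (x + t • v)) v with hq'
  have hderiv : ∀ t ∈ Set.uIcc (0:ℝ) 1,
      HasDerivAt (fun s : ℝ => f (x + s • v)) (q' t) t :=
    fun t _ => curve_deriv f f' hgrad x v t
  have hcont : Continuous q' := by
    apply Continuous.inner
    · exact hlip.continuous.comp (by continuity)
    · exact continuous_const
  have hFTC : ∫ t in (0:ℝ)..1, q' t = f (x + (1:ℝ) • v) - f (x + (0:ℝ) • v) :=
    intervalIntegral.integral_eq_sub_of_hasDerivAt hderiv
      (hcont.intervalIntegrable 0 1)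
  have hxy1 : x + (1:ℝ) • v = y := by rw [hv]; module
  have hxy0 : x + (0:ℝ) • v = x := by module
  have hbound : ∀ t ∈ Set.Icc (0:ℝ) 1, q' t ≤ q' 0 + Lf * ‖v‖^2 * t := by
    intro t ht
    have h1 : q' t - q' 0 = inner ℝ (f' (x + t • v) - f' x) v := by
      simp [hq', hxy0, inner_sub_left]
    have h2 : (inner ℝ (f' (x + t • v) - f' x) v : ℝ) ≤ ‖f' (x + t • v) - f' x‖ * ‖v‖ :=
      real_inner_le_norm _ _
    have h3 : ‖f' (x + t • v) - f' x‖ ≤ Lf * (t * ‖v‖) := by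
      have := hlip.dist_le_mul (x + t • v) x
      rw [Real.coe_toNNReal Lf hLf] at this
      have hd : dist (x + t • v) x = t * ‖v‖ := by
        rw [dist_eq_norm]
        simp [norm_smul, abs_of_nonneg ht.1]
      rw [← dist_eq_norm]
      rw [hd] at this
      exact this
    nlinarith [norm_nonneg v, mul_le_mul_of_nonneg_right h3 (norm_nonneg v)]
  have hint : ∫ t in (0:ℝ)..1, q' t ≤ ∫ t in (0:ℝ)..1, (q' 0 + Lf * ‖v‖^2 * t) := by
    apply intervalIntegral.integral_mono_on (by norm_num)
      (hcont.intervalIntegrable 0 1)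
      ((continuous_const.add (continuous_const.mul continuous_id')).intervalIntegrable 0 1)
    exact hbound
  have hval : ∫ t in (0:ℝ)..1, (q' 0 + Lf * ‖v‖^2 * t) = q' 0 + Lf * ‖v‖^2 / 2 := by
    rw [intervalIntegral.integral_add (g := fun t => Lf * ‖v‖^2 * t) (intervalIntegrable_const)
      ((continuous_const.mul continuous_id').intervalIntegrable 0 1),
      intervalIntegral.integral_const_mul, integral_id]
    norm_num
    ring
  have hq'0 : q' 0 = inner ℝ (f' x) v := by simp [hq', hxy0]
  rw [hFTC, hxy1, hxy0] at *
  rw [hval] at hint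
  rw [hq'0] at hint
  nlinarith [hint]

/-- the sandwich bounds
`φ(x̄) ≤ φ_γ(x) − ((1−γL_f)/(2γ))‖x−x̄‖²` and `φ(x̄) ≥ φ_γ(x) − (1/(2γ))‖x−x̄‖²`. -/
theorem fbe_sandwich {n : ℕ} (f : Eucl n → ℝ) (f' : Eucl n → Eucl n)
    (hconvf : ConvexOn ℝ Set.univ f) (hgrad : ∀ x, HasGradientAt f (f' x) x)
    (Lf : ℝ) (hLf : 0 ≤ Lf) (hlip : LipschitzWith (Real.toNNReal Lf) f')
    (g : Eucl n → EReal) (hgp : ProperFun g) (hglsc : LowerSemicontinuous g)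
    (hgconv : ConvexFun g)
    (γ : ℝ) (hγ : 0 < γ) (x xbar : Eucl n) (hxbar : IsProx g γ (x - γ • f' x) xbar) :
    (f xbar : EReal) + g xbar
        ≤ fbe f f' g γ x - (((1 - γ*Lf)/(2*γ) * ‖x - xbar‖^2 : ℝ) : EReal) ∧
    fbe f f' g γ x - ((1/(2*γ) * ‖x - xbar‖^2 : ℝ) : EReal)
        ≤ (f xbar : EReal) + g xbar := by
  have hγ' : γ ≠ 0 := ne_of_gt hγ
  -- the key algebraic identity
  have hK : ∀ w : Eucl n, f x + (inner ℝ (f' x) (w - x) : ℝ) + 1/(2*γ) * ‖w - x‖^2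
      = (f x - γ/2 * ‖f' x‖^2) + 1/(2*γ) * ‖w - (x - γ • f' x)‖^2 := by
    intro w
    have h1 : w - (x - γ • f' x) = (w - x) + γ • f' x := by module
    rw [h1, norm_add_sq_real, real_inner_smul_right, real_inner_comm, norm_smul,
      Real.norm_eq_abs, abs_of_pos hγ, mul_pow]
    field_simp
    ring
  -- g xbar is a real number
  have hbot : g xbar ≠ ⊥ := hgp.2 xbar
  have htop : g xbar ≠ ⊤ := by
    obtain ⟨w0, hw0⟩ := hgp.1
    intro hT
    have h := hxbar w0
    rw [hT, EReal.top_add_coe, top_le_iff] at h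
    have hlt := EReal.add_lt_top hw0 (EReal.coe_ne_top (1/(2*γ) * ‖w0 - (x - γ • f' x)‖^2))
    rw [h] at hlt
    exact lt_irrefl _ hlt
  set b := (g xbar).toReal with hb
  have hgb : g xbar = (b : EReal) := (EReal.coe_toReal htop hbot).symm
  set A : Eucl n → ℝ := fun w => f x + (inner ℝ (f' x) (w - x) : ℝ) + 1/(2*γ) * ‖w - x‖^2
    with hA
  -- value of fbe
  have hfbe : fbe f f' g γ x = ((A xbar + b : ℝ) : EReal) := by
    apply le_antisymm
    · have h := iInf_le
        (fun w => ((f x + (inner ℝ (f' x) (w - x) : ℝ) + 1/(2*γ) * ‖w - x‖^2 : ℝ) : EReal) + g w)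
        xbar
      rw [fbe]
      calc _ ≤ ((A xbar : ℝ) : EReal) + g xbar := h
        _ = _ := by rw [hgb, ← EReal.coe_add]
    · rw [fbe]
      apply le_iInf
      intro w
      by_cases hwt : g w = ⊤
      · rw [hwt, EReal.coe_add_top]; exact le_top
      have hwb : g w ≠ ⊥ := hgp.2 w
      have hgc : g w = ((g w).toReal : EReal) := (EReal.coe_toReal hwt hwb).symm
      set c := (g w).toReal
      have hprox := hxbar w
      rw [hgb, hgc, ← EReal.coe_add, ← EReal.coe_add, EReal.coe_le_coe_iff] at hprox
      have : ((A xbar + b : ℝ) : EReal) ≤ ((A w + c : ℝ) : EReal) := by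
        rw [EReal.coe_le_coe_iff, hA]
        simp only
        rw [hK w, hK xbar]
        linarith
      calc ((A xbar + b : ℝ) : EReal) ≤ ((A w + c : ℝ) : EReal) := this
        _ = _ := by rw [hgc, ← EReal.coe_add]
  have hnorm : ‖x - xbar‖ = ‖xbar - x‖ := norm_sub_rev _ _
  constructor
  · rw [hfbe, hgb, ← EReal.coe_add, ← EReal.coe_sub, EReal.coe_le_coe_iff]
    have hd := descent f f' hgrad Lf hLf hlip x xbar
    have hco : (1 - γ*Lf)/(2*γ) * ‖x - xbar‖^2
        = 1/(2*γ) * ‖xbar - x‖^2 - Lf/2 * ‖xbar - x‖^2 := by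
      rw [hnorm]; field_simp
    rw [hA]; simp only
    linarith
  · rw [hfbe, hgb, ← EReal.coe_add, ← EReal.coe_sub, EReal.coe_le_coe_iff]
    have hgi := grad_ineq f f' hconvf hgrad x xbar
    rw [hA]; simp only
    have heq : 1/(2*γ) * ‖x - xbar‖^2 = 1/(2*γ) * ‖xbar - x‖^2 := by rw [hnorm]
    linarith
end
end

section
/- Let f be convex with L_f-Lipschitz gradient, g proper lsc convex, and 0 < γ < 1/L_f. Then inf φ = inf φ_γ, where φ = f + g and φ_γ is the forward-backward envelope with stepsize γ. -/
set_option linter.unusedVariables false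
set_option maxHeartbeats 800000
noncomputable section

lemma descent_lemma {n : ℕ} (f : Eucl n → ℝ) (f' : Eucl n → Eucl n)
    (hgrad : ∀ x, HasGradientAt f (f' x) x)
    (Lf : ℝ) (hLf : 0 < Lf) (hlip : LipschitzWith (Real.toNNReal Lf) f')
    (x w : Eucl n) :
    f w ≤ f x + (inner ℝ (f' x) (w - x) : ℝ) + Lf/2 * ‖w - x‖^2 := by
  set v := w - x with hv
  have hcont : Continuous f' := hlip.continuous
  have hderiv : ∀ t : ℝ, HasDerivAt (fun s : ℝ => f (x + s • v))
      ((inner ℝ (f' (x + t • v)) v : ℝ)) t := by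
    intro t
    have h1 : HasDerivAt (fun s : ℝ => x + s • v) v t := by
      simpa using ((hasDerivAt_id t).smul_const v).const_add x
    have h2 := (hgrad (x + t • v)).hasFDerivAt.comp_hasDerivAt t h1
    simp [InnerProductSpace.toDual_apply_apply] at h2; exact h2
  have hcont' : Continuous fun t : ℝ => (inner ℝ (f' (x + t • v)) v : ℝ) := by
    exact (hcont.comp (by continuity)).inner continuous_const
  have hint : f (x + (1:ℝ) • v) - f (x + (0:ℝ) • v)
      = ∫ t in (0:ℝ)..1, (inner ℝ (f' (x + t • v)) v : ℝ) := by
    symm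
    exact intervalIntegral.integral_eq_sub_of_hasDerivAt (fun t _ => hderiv t)
      (hcont'.intervalIntegrable 0 1)
  have hbound : ∀ t ∈ Set.Icc (0:ℝ) 1,
      (inner ℝ (f' (x + t • v)) v : ℝ) ≤ (inner ℝ (f' x) v : ℝ) + Lf * t * ‖v‖^2 := by
    intro t ht
    have h1 : (inner ℝ (f' (x + t • v)) v : ℝ) - (inner ℝ (f' x) v : ℝ)
        = (inner ℝ (f' (x + t • v) - f' x) v : ℝ) := by
      rw [inner_sub_left]
    have h2 : (inner ℝ (f' (x + t • v) - f' x) v : ℝ) ≤ ‖f' (x + t • v) - f' x‖ * ‖v‖ :=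
      real_inner_le_norm _ _
    have h3 : ‖f' (x + t • v) - f' x‖ ≤ Lf * (t * ‖v‖) := by
      have := hlip.dist_le_mul (x + t • v) x
      rw [dist_eq_norm] at this
      have h4 : dist (x + t • v) x = t * ‖v‖ := by
        rw [dist_eq_norm]
        simp [norm_smul, abs_of_nonneg ht.1]
      calc ‖f' (x + t • v) - f' x‖ ≤ Real.toNNReal Lf * dist (x + t • v) x := by
            simpa [dist_eq_norm] using hlip.dist_le_mul (x + t • v) x
        _ = Lf * (t * ‖v‖) := by rw [h4, Real.coe_toNNReal _ hLf.le]
    nlinarith [norm_nonneg v, h2.trans (mul_le_mul_of_nonneg_right h3 (norm_nonneg v))]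
  have hmono : (∫ t in (0:ℝ)..1, (inner ℝ (f' (x + t • v)) v : ℝ))
      ≤ ∫ t in (0:ℝ)..1, ((inner ℝ (f' x) v : ℝ) + Lf * t * ‖v‖^2) := by
    apply intervalIntegral.integral_mono_on zero_le_one
      (hcont'.intervalIntegrable 0 1)
      ((by continuity : Continuous fun t : ℝ => (inner ℝ (f' x) v : ℝ) + Lf * t * ‖v‖^2).intervalIntegrable 0 1)
      hbound
  have hval : (∫ t in (0:ℝ)..1, ((inner ℝ (f' x) v : ℝ) + Lf * t * ‖v‖^2))
      = (inner ℝ (f' x) v : ℝ) + Lf/2 * ‖v‖^2 := by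
    have hfe : (fun t : ℝ => (inner ℝ (f' x) v : ℝ) + Lf * t * ‖v‖^2)
        = fun t : ℝ => (inner ℝ (f' x) v : ℝ) + (Lf * ‖v‖^2) * t := by
      ext t; ring
    calc (∫ t in (0:ℝ)..1, ((inner ℝ (f' x) v : ℝ) + Lf * t * ‖v‖^2))
        = ∫ t in (0:ℝ)..1, ((inner ℝ (f' x) v : ℝ) + (Lf * ‖v‖^2) * t) := by rw [hfe]
      _ = (∫ t in (0:ℝ)..1, ((inner ℝ (f' x) v : ℝ)))
          + ∫ t in (0:ℝ)..1, (Lf * ‖v‖^2) * t := by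
          exact intervalIntegral.integral_add intervalIntegrable_const
            ((continuous_const.mul continuous_id).intervalIntegrable 0 1)
      _ = (inner ℝ (f' x) v : ℝ) + (Lf * ‖v‖^2) * ∫ t in (0:ℝ)..1, t := by
          rw [intervalIntegral.integral_const_mul, intervalIntegral.integral_const]; simp
      _ = (inner ℝ (f' x) v : ℝ) + Lf/2 * ‖v‖^2 := by rw [integral_id]; ring
  have : f w - f x ≤ (inner ℝ (f' x) v : ℝ) + Lf/2 * ‖v‖^2 := by
    have hw : x + (1:ℝ) • v = w := by simp [hv]
    have hx : x + (0:ℝ) • v = x := by simp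
    rw [hw, hx] at hint
    rw [hint]
    exact hmono.trans_eq hval
  linarith

/-- `inf φ = inf φ_γ` for `0 < γ < 1/L_f`. -/
theorem inf_cost_eq_inf_fbe {n : ℕ} (f : Eucl n → ℝ) (f' : Eucl n → Eucl n)
    (hconvf : ConvexOn ℝ Set.univ f) (hgrad : ∀ x, HasGradientAt f (f' x) x)
    (Lf : ℝ) (hLf : 0 < Lf) (hlip : LipschitzWith (Real.toNNReal Lf) f')
    (g : Eucl n → EReal) (hgp : ProperFun g) (hglsc : LowerSemicontinuous g)
    (hgconv : ConvexFun g)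
    (γ : ℝ) (hγ : 0 < γ) (hγL : γ < 1/Lf) :
    (⨅ x, (f x : EReal) + g x) = ⨅ x, fbe f f' g γ x := by
  apply le_antisymm
  · -- inf φ ≤ inf fbe : each fbe term ≥ inf φ
    apply le_iInf; intro x
    unfold fbe
    apply le_iInf; intro w
    have hreal : f w ≤ f x + (inner ℝ (f' x) (w - x) : ℝ) + 1/(2*γ) * ‖w - x‖^2 := by
      have hd := descent_lemma f f' hgrad Lf hLf hlip x w
      have hcoef : Lf/2 ≤ 1/(2*γ) := by
        rw [div_le_div_iff₀ (by norm_num) (by positivity)]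
        have : γ * Lf < 1 := by
          have := (lt_div_iff₀ hLf).mp hγL
          linarith
        nlinarith
      nlinarith [sq_nonneg ‖w - x‖, mul_le_mul_of_nonneg_right hcoef (sq_nonneg ‖w - x‖)]
    calc (⨅ y, (f y : EReal) + g y) ≤ (f w : EReal) + g w := iInf_le _ w
      _ ≤ ((f x + (inner ℝ (f' x) (w - x) : ℝ) + 1/(2*γ) * ‖w - x‖^2 : ℝ) : EReal) + g w := by
          exact add_le_add_left (EReal.coe_le_coe_iff.mpr hreal) _
  · -- inf fbe ≤ inf φ : fbe x ≤ φ x (take w = x)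
    apply le_iInf; intro x
    refine (iInf_le _ x).trans ?_
    unfold fbe
    refine (iInf_le _ x).trans_eq ?_
    simp
end
end

section
/- Let f be convex with L_f-Lipschitz gradient, g proper lsc convex, 0 < γ < 1/L_f, and suppose X⋆ = argmin φ ≠ ∅ with φ = f + g. Then φ_γ(x) − φ⋆ ≤ (1/(2γ)) dist(x, X⋆)² for all x ∈ ℝⁿ, where φ_γ is the forward-backward envelope and φ⋆ = min φ. -/
set_option linter.unusedVariables false
noncomputable section

lemma grad_ineq_aux {n : ℕ} (f : Eucl n → ℝ) (f' : Eucl n → Eucl n)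
    (hconvf : ConvexOn ℝ Set.univ f) (hgrad : ∀ x, HasGradientAt f (f' x) x)
    (x z : Eucl n) : f x + (inner ℝ (f' x) (z - x) : ℝ) ≤ f z := by
  set L : ℝ → Eucl n := fun t => x + t • (z - x) with hL
  have hline : ∀ t : ℝ, HasDerivAt L (z - x) t := by
    intro t
    have h1 : HasDerivAt (fun t : ℝ => t • (z - x)) ((1:ℝ) • (z - x)) t :=
      (hasDerivAt_id t).smul_const (z - x)
    simpa [one_smul, hL] using h1.const_add x
  have hconv1 : ConvexOn ℝ Set.univ (f ∘ L) := by
    have : L = fun t : ℝ => AffineMap.lineMap x z t := by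
      funext t; simp [AffineMap.lineMap_apply, hL]; module
    rw [this]
    have := hconvf.comp_affineMap (AffineMap.lineMap x z : ℝ →ᵃ[ℝ] Eucl n)
    simpa using this
  have hderiv : HasDerivAt (f ∘ L) ((inner ℝ (f' x) (z - x) : ℝ)) 0 := by
    have h0 : L 0 = x := by simp [hL]
    have hg := (hgrad x).hasFDerivAt
    rw [← h0] at hg
    have := hg.comp_hasDerivAt 0 (hline 0)
    simpa [InnerProductSpace.toDual_apply_apply, h0] using this
  have := hconv1.le_slope_of_hasDerivAt (Set.mem_univ (0:ℝ)) (Set.mem_univ (1:ℝ))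
    zero_lt_one hderiv
  have hs : slope (f ∘ L) 0 1 = f z - f x := by
    simp [slope, hL]
  rw [hs] at this
  linarith

/-- global quadratic upper bound
`φ_γ(x) − φ⋆ ≤ (1/(2γ)) dist(x, X⋆)²`. -/
theorem fbe_quadratic_upper_bound {n : ℕ} (f : Eucl n → ℝ) (f' : Eucl n → Eucl n)
    (hconvf : ConvexOn ℝ Set.univ f) (hgrad : ∀ x, HasGradientAt f (f' x) x)
    (Lf : ℝ) (hLf : 0 < Lf) (hlip : LipschitzWith (Real.toNNReal Lf) f')
    (g : Eucl n → EReal) (hgp : ProperFun g) (hglsc : LowerSemicontinuous g)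
    (hgconv : ConvexFun g)
    (γ : ℝ) (hγ : 0 < γ) (hγL : γ < 1/Lf)
    (Xstar : Set (Eucl n))
    (hX : Xstar = {z | ∀ y, (f z : EReal) + g z ≤ (f y : EReal) + g y}) (hne : Xstar.Nonempty) :
    ∀ x : Eucl n,
      fbe f f' g γ x ≤ (⨅ y, (f y : EReal) + g y)
        + ((1/(2*γ) * (Metric.infDist x Xstar)^2 : ℝ) : EReal) := by
  intro x
  simp only [fbe]
  obtain ⟨z₀, hz₀⟩ := hne
  have hz₀' : ∀ y, (f z₀ : EReal) + g z₀ ≤ (f y : EReal) + g y := by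
    rw [hX] at hz₀; exact hz₀
  set S : EReal := ⨅ y, (f y : EReal) + g y with hS
  have hSeq : S = (f z₀ : EReal) + g z₀ :=
    le_antisymm (iInf_le _ z₀) (le_iInf hz₀')
  obtain ⟨x₁, hx₁⟩ := hgp.1
  have hnt : (f z₀ : EReal) + g z₀ ≠ ⊤ := by
    intro h
    have h1 : (f x₁ : EReal) + g x₁ < ⊤ :=
      EReal.add_lt_top (EReal.coe_ne_top _) hx₁
    exact absurd (h ▸ hz₀' x₁) (not_le.2 h1)
  have hgz₀top : g z₀ ≠ ⊤ := by
    intro h; rw [h] at hnt; exact hnt (EReal.add_top_of_ne_bot (EReal.coe_ne_bot _))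
  obtain ⟨r₀, hr₀⟩ : ∃ r : ℝ, g z₀ = (r : EReal) := by
    lift g z₀ to ℝ using ⟨hgz₀top, hgp.2 z₀⟩ with r hr
    exact ⟨r, rfl⟩
  have hSr : S = ((f z₀ + r₀ : ℝ) : EReal) := by rw [hSeq, hr₀, EReal.coe_add]
  set d : ℝ := Metric.infDist x Xstar with hd
  have hd0 : 0 ≤ d := Metric.infDist_nonneg
  have key : ∀ ε > (0:ℝ),
      (⨅ w, ((f x + (inner ℝ (f' x) (w - x) : ℝ) + 1/(2*γ) * ‖w - x‖^2 : ℝ) : EReal) + g w)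
        ≤ ((f z₀ + r₀ + 1/(2*γ) * (d + ε)^2 : ℝ) : EReal) := by
    intro ε hε
    obtain ⟨z, hzX, hzd⟩ := (Metric.infDist_lt_iff ⟨z₀, hz₀⟩).1
      (show Metric.infDist x Xstar < d + ε by rw [← hd]; linarith)
    have hz' : ∀ y, (f z : EReal) + g z ≤ (f y : EReal) + g y := by
      rw [hX] at hzX; exact hzX
    have hφz : (f z : EReal) + g z = S := le_antisymm (le_iInf hz') (iInf_le _ z)
    calc (⨅ w, ((f x + (inner ℝ (f' x) (w - x) : ℝ) + 1/(2*γ) * ‖w - x‖^2 : ℝ) : EReal) + g w)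
        ≤ ((f x + (inner ℝ (f' x) (z - x) : ℝ) + 1/(2*γ) * ‖z - x‖^2 : ℝ) : EReal) + g z :=
          iInf_le _ z
      _ ≤ ((f z + 1/(2*γ) * (d + ε)^2 : ℝ) : EReal) + g z := by
          apply add_le_add_left
          apply EReal.coe_le_coe_iff.2
          have h1 : f x + (inner ℝ (f' x) (z - x) : ℝ) ≤ f z :=
            grad_ineq_aux f f' hconvf hgrad x z
          have h2 : ‖z - x‖ ≤ d + ε := by
            rw [show ‖z - x‖ = dist x z by rw [dist_comm, dist_eq_norm]]
            linarith
          have h3 : ‖z - x‖^2 ≤ (d + ε)^2 := pow_le_pow_left₀ (norm_nonneg _) h2 2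
          have h4 : 0 ≤ 1/(2*γ) := by positivity
          nlinarith
      _ = ((f z : EReal) + g z) + ((1/(2*γ) * (d + ε)^2 : ℝ) : EReal) := by
          rw [EReal.coe_add, add_assoc, add_comm (((1/(2*γ) * (d + ε)^2 : ℝ)) : EReal) (g z),
            ← add_assoc]
      _ = S + ((1/(2*γ) * (d + ε)^2 : ℝ) : EReal) := by rw [hφz]
      _ = ((f z₀ + r₀ + 1/(2*γ) * (d + ε)^2 : ℝ) : EReal) := by
          rw [hSr, ← EReal.coe_add]
  rw [hSr, ← EReal.coe_add]
  by_contra hcon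
  push_neg at hcon
  obtain ⟨q, hq1, hq2⟩ := EReal.exists_between_coe_real hcon
  have hF : ContinuousAt (fun ε : ℝ => f z₀ + r₀ + 1/(2*γ) * (d + ε)^2) 0 := by
    fun_prop
  have hlt : f z₀ + r₀ + 1/(2*γ) * (d + 0)^2 < q := by
    have := EReal.coe_lt_coe_iff.1 hq1
    simpa using this
  have hev : ∀ᶠ ε in nhdsWithin (0:ℝ) (Set.Ioi 0),
      f z₀ + r₀ + 1/(2*γ) * (d + ε)^2 < q := by
    have := hF.continuousWithinAt (s := Set.Ioi (0:ℝ))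
    exact this.eventually_lt continuousWithinAt_const hlt
  obtain ⟨ε, hεlt, hε⟩ := (hev.and eventually_mem_nhdsWithin).exists
  have h1 := key ε hε
  have h2 : ((f z₀ + r₀ + 1/(2*γ) * (d + ε)^2 : ℝ) : EReal) < ((q : ℝ) : EReal) :=
    EReal.coe_lt_coe_iff.2 hεlt
  exact absurd (h1.trans_lt (h2.trans hq2)) (lt_irrefl _)
end
end

section
/- Suppose f(x) = (1/2)⟨x, Hx⟩ + ⟨h, x⟩ with H symmetric positive semidefinite, let L_f = λ_max(H), μ_f = λ_min(H), g proper lsc convex, and 0 < γ ≤ 1/L_f. Then the forward-backward envelope φ_γ is convex with Lipschitz gradient; specifically, μ‖x−y‖² ≤ ⟨∇φ_γ(x) − ∇φ_γ(y), x−y⟩ ≤ L‖x−y‖² with L = (1−γμ_f)/γ and μ = min{μ_f(1−γμ_f), L_f(1−γL_f)}. -/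
set_option linter.unusedVariables false
noncomputable section

lemma psd_op_sq_le {n : ℕ} (B : Eucl n →ₗ[ℝ] Eucl n)
    (hsymB : ∀ z w : Eucl n, (inner ℝ (B z) w : ℝ) = inner ℝ z (B w))
    (hpos : ∀ z : Eucl n, 0 ≤ (inner ℝ z (B z) : ℝ))
    (c : ℝ) (hc : 0 ≤ c)
    (hub : ∀ z : Eucl n, (inner ℝ z (B z) : ℝ) ≤ c * ‖z‖^2)
    (d : Eucl n) : ‖B d‖^2 ≤ c * (inner ℝ d (B d) : ℝ) := by
  set u := B d with hu
  have hquad : ∀ x : ℝ, 0 ≤ (inner ℝ u (B u) : ℝ) * (x*x) + (2 * (inner ℝ u (B d) : ℝ)) * x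
      + (inner ℝ d (B d) : ℝ) := by
    intro x
    have h0 := hpos (d + x • u)
    have hexp : (inner ℝ (d + x • u) (B (d + x • u)) : ℝ)
        = (inner ℝ u (B u) : ℝ) * (x*x) + (2 * (inner ℝ u (B d) : ℝ)) * x + (inner ℝ d (B d) : ℝ) := by
      rw [map_add, map_smul, inner_add_left, inner_add_right, inner_add_right,
        real_inner_smul_left, real_inner_smul_right, real_inner_smul_left,
        real_inner_smul_right]
      have h1 : (inner ℝ d (B u) : ℝ) = (inner ℝ u (B d) : ℝ) := by
        rw [← hsymB u d, real_inner_comm]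
      rw [h1]; ring
    linarith [hexp ▸ h0]
  have hdisc := discrim_le_zero hquad
  rw [discrim] at hdisc
  have huBd : (inner ℝ u (B d) : ℝ) = ‖u‖^2 := by
    rw [hu]; exact real_inner_self_eq_norm_sq (B d)
  have hBu : (inner ℝ u (B u) : ℝ) ≤ c * ‖u‖^2 := hub u
  have hposd := hpos d
  have hposu := hpos u
  rw [huBd] at hdisc
  rcases eq_or_lt_of_le (sq_nonneg ‖u‖) with h0 | h0
  · have : ‖B d‖^2 = 0 := by rw [← hu, ← h0]
    rw [this]; exact mul_nonneg hc hposd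
  · have key : (2*‖u‖^2)^2 ≤ 4 * (c * ‖u‖^2) * (inner ℝ d (B d) : ℝ) := by
      nlinarith [mul_le_mul_of_nonneg_right hBu hposd]
    have h4 : ‖u‖^2 * ‖u‖^2 ≤ (c * (inner ℝ d (B d) : ℝ)) * ‖u‖^2 := by nlinarith
    exact le_of_mul_le_mul_right h4 h0

lemma limit01 (e M : ℝ) (hM : 0 ≤ M) (h : ∀ t : ℝ, 0 < t → t ≤ 1 → e ≤ M * t) : e ≤ 0 := by
  by_contra hne
  push_neg at hne
  have htpos : 0 < min 1 (e / (2*(M+1))) := lt_min one_pos (by positivity)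
  have ht := h _ htpos (min_le_left _ _)
  have h2 : M * min 1 (e/(2*(M+1))) ≤ M * (e/(2*(M+1))) :=
    mul_le_mul_of_nonneg_left (min_le_right _ _) hM
  have h3 : M * (e/(2*(M+1))) < e := by
    rw [mul_div_assoc'] ; rw [div_lt_iff₀ (by linarith)] ; nlinarith
  linarith

lemma firm_identity {n : ℕ} (p q u v : Eucl n) :
    (inner ℝ (p - u) (q - p) : ℝ) + (inner ℝ (q - v) (p - q) : ℝ)
      = (inner ℝ (p - q) (u - v) : ℝ) - ‖p - q‖^2 := by
  simp only [inner_sub_left, inner_sub_right]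
  rw [← real_inner_self_eq_norm_sq]
  simp only [inner_sub_left, inner_sub_right]
  rw [real_inner_comm q p, real_inner_comm u p, real_inner_comm u q, real_inner_comm v p,
    real_inner_comm v q]
  ring

lemma inner_G_val {n : ℕ} (A : Eucl n →ₗ[ℝ] Eucl n)
    (hsym : ∀ x y : Eucl n, (inner ℝ (A x) y : ℝ) = inner ℝ x (A y))
    (γ : ℝ) (hγ : γ ≠ 0) (d s : Eucl n) :
    (inner ℝ (γ⁻¹ • (d - s) - A (d - s)) d : ℝ)
      = γ⁻¹ * (‖d‖^2 - γ * (inner ℝ d (A d) : ℝ) - (inner ℝ s (d - γ • A d) : ℝ)) := by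
  rw [inner_sub_left, real_inner_smul_left, map_sub, inner_sub_left, inner_sub_left,
    real_inner_self_eq_norm_sq, inner_sub_right, real_inner_smul_right,
    ← hsym s d, real_inner_comm d (A d)]
  field_simp
  ring

lemma opN_bound {n : ℕ} (A : Eucl n →ₗ[ℝ] Eucl n)
    (hsym : ∀ x y : Eucl n, (inner ℝ (A x) y : ℝ) = inner ℝ x (A y))
    (μf Lf : ℝ) (hμ : 0 ≤ μf) (hμL : μf ≤ Lf)
    (hlow : ∀ x : Eucl n, μf * ‖x‖^2 ≤ (inner ℝ x (A x) : ℝ))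
    (hupp : ∀ x : Eucl n, (inner ℝ x (A x) : ℝ) ≤ Lf * ‖x‖^2)
    (d : Eucl n) :
    ‖A d‖^2 ≤ (Lf + μf) * (inner ℝ d (A d) : ℝ) - μf * Lf * ‖d‖^2 := by
  set B : Eucl n →ₗ[ℝ] Eucl n := A - μf • (LinearMap.id : Eucl n →ₗ[ℝ] Eucl n) with hBdef
  have hBapp : ∀ z : Eucl n, B z = A z - μf • z := by
    intro z
    rw [hBdef]
    simp only [LinearMap.sub_apply, LinearMap.smul_apply, LinearMap.id_apply]
  have hBinner : ∀ z : Eucl n, (inner ℝ z (B z) : ℝ) = (inner ℝ z (A z) : ℝ) - μf * ‖z‖^2 := by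
    intro z
    rw [hBapp z, inner_sub_right, real_inner_smul_right, real_inner_self_eq_norm_sq]
  have hB := psd_op_sq_le B
    (by intro z w
        rw [hBapp z, hBapp w, inner_sub_left, inner_sub_right, real_inner_smul_left,
          real_inner_smul_right, hsym z w])
    (by intro z; rw [hBinner z]; linarith [hlow z])
    (Lf - μf) (by linarith)
    (by intro z; rw [hBinner z]; linarith [hupp z])
    d
  have hBd : ‖B d‖^2 = ‖A d‖^2 - 2*μf*(inner ℝ d (A d) : ℝ) + μf^2*‖d‖^2 := by
    rw [hBapp d, norm_sub_sq_real, real_inner_smul_right, norm_smul, mul_pow,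
      Real.norm_eq_abs, sq_abs, real_inner_comm (A d) d]
    ring
  rw [hBd, hBinner d] at hB
  nlinarith [hB]

lemma quad_est (μf Lf γ D t N P : ℝ)
    (hμ : 0 ≤ μf) (hμL : μf ≤ Lf) (hLf : 0 < Lf) (hγ : 0 < γ) (hγLf : γ*Lf ≤ 1)
    (hD : 0 ≤ D) (htlow : μf*D ≤ t) (hthigh : t ≤ Lf*D)
    (hN : N ≤ (Lf + μf)*t - μf*Lf*D)
    (hP0 : 0 ≤ P) (hPw : P ≤ D - 2*γ*t + γ^2*N) :
    min (μf*(1 - γ*μf)) (Lf*(1 - γ*Lf)) * D ≤ γ⁻¹ * (D - γ*t - P) ∧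
      γ⁻¹ * (D - γ*t - P) ≤ (1 - γ*μf)/γ * D := by
  constructor
  · have hlb : t - γ * N ≤ γ⁻¹ * (D - γ*t - P) := by
      have h1 : γ⁻¹ * (D - γ*t - (D - 2*γ*t + γ^2*N)) ≤ γ⁻¹ * (D - γ*t - P) :=
        mul_le_mul_of_nonneg_left (by linarith) (by positivity)
      have heq : γ⁻¹ * (D - γ*t - (D - 2*γ*t + γ^2*N)) = t - γ*N := by
        field_simp; ring
      linarith
    have hγN : γ * N ≤ γ * ((Lf + μf) * t - μf * Lf * D) :=
      mul_le_mul_of_nonneg_left hN (le_of_lt hγ)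
    rcases le_total (μf*(1 - γ*μf)) (Lf*(1 - γ*Lf)) with hmin | hmin
    · rw [min_eq_left hmin]
      rcases le_total (γ*(μf+Lf)) 1 with hcase | hcase
      · nlinarith [mul_nonneg (by linarith : (0:ℝ) ≤ 1 - γ*(μf+Lf))
          (by linarith : (0:ℝ) ≤ t - μf*D)]
      · nlinarith [mul_nonneg (by linarith : (0:ℝ) ≤ γ*(μf+Lf) - 1)
          (by linarith : (0:ℝ) ≤ Lf*D - t), mul_le_mul_of_nonneg_right hmin hD]
    · rw [min_eq_right hmin]
      rcases le_total (γ*(μf+Lf)) 1 with hcase | hcase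
      · nlinarith [mul_nonneg (by linarith : (0:ℝ) ≤ 1 - γ*(μf+Lf))
          (by linarith : (0:ℝ) ≤ t - μf*D), mul_le_mul_of_nonneg_right hmin hD]
      · nlinarith [mul_nonneg (by linarith : (0:ℝ) ≤ γ*(μf+Lf) - 1)
          (by linarith : (0:ℝ) ≤ Lf*D - t)]
  · have h1 : γ⁻¹ * (D - γ*t - P) ≤ γ⁻¹ * (D - γ*(μf*D)) :=
      mul_le_mul_of_nonneg_left
        (by nlinarith [mul_le_mul_of_nonneg_left htlow hγ.le]) (by positivity)
    have h2 : γ⁻¹ * (D - γ*(μf*D)) = (1 - γ*μf)/γ * D := by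
      field_simp
    linarith

set_option maxHeartbeats 1000000 in
theorem fbe_aux_main {n : ℕ} (A : Eucl n →ₗ[ℝ] Eucl n) (hvec : Eucl n)
    (hsym : ∀ x y : Eucl n, (inner ℝ (A x) y : ℝ) = inner ℝ x (A y))
    (μf Lf : ℝ) (hμ : 0 ≤ μf) (hμL : μf ≤ Lf) (hLf : 0 < Lf)
    (hlow : ∀ x : Eucl n, μf * ‖x‖^2 ≤ (inner ℝ x (A x) : ℝ))
    (hupp : ∀ x : Eucl n, (inner ℝ x (A x) : ℝ) ≤ Lf * ‖x‖^2)
    (f : Eucl n → ℝ) (hf : ∀ x, f x = (1/2) * (inner ℝ x (A x) : ℝ) + (inner ℝ hvec x : ℝ))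
    (g : Eucl n → EReal)
    (hgp : (∃ x, g x ≠ ⊤) ∧ ∀ x, g x ≠ ⊥)
    (hglsc : LowerSemicontinuous g)
    (hgconv : ∀ x y : Eucl n, ∀ a b : ℝ, 0 ≤ a → 0 ≤ b → a + b = 1 →
      g (a • x + b • y) ≤ (a : EReal) * g x + (b : EReal) * g y)
    (γ : ℝ) (hγ : 0 < γ) (hγL : γ ≤ 1/Lf)
    (T : Eucl n → Eucl n)
    (hT : ∀ x, ∀ w, g (T x) + ((1/(2*γ) * ‖T x - (x - γ • (A x + hvec))‖^2 : ℝ) : EReal)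
      ≤ g w + ((1/(2*γ) * ‖w - (x - γ • (A x + hvec))‖^2 : ℝ) : EReal))
    (R : Eucl n → Eucl n) (hR : ∀ x, R x = γ⁻¹ • (x - T x))
    (G : Eucl n → Eucl n) (hG : ∀ x, G x = R x - γ • A (R x)) :
    ∀ x y : Eucl n,
      min (μf*(1 - γ*μf)) (Lf*(1 - γ*Lf)) * ‖x - y‖^2
          ≤ (inner ℝ (G x - G y) (x - y) : ℝ) ∧
      (inner ℝ (G x - G y) (x - y) : ℝ) ≤ (1 - γ*μf)/γ * ‖x - y‖^2 := by
  obtain ⟨⟨w₀, hw₀⟩, hbot⟩ := hgp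
  have hγLf : γ * Lf ≤ 1 := (le_div_iff₀ hLf).mp hγL
  -- finiteness of g at prox points
  have hfin : ∀ z : Eucl n, g (T z) ≠ ⊤ := by
    intro z htop
    have h1 := hT z w₀
    rw [htop, EReal.top_add_of_ne_bot (EReal.coe_ne_bot _)] at h1
    exact absurd (top_le_iff.mp h1)
      ((EReal.add_lt_top hw₀ (EReal.coe_ne_top _)).ne)
  -- subgradient inequality at prox points
  have key : ∀ z w' : Eucl n, g w' ≠ ⊤ →
      (g (T z)).toReal ≤ (g w').toReal
        + (1/γ) * (inner ℝ (T z - (z - γ • (A z + hvec))) (w' - T z) : ℝ) := by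
    intro z w' hw'
    have hga : g (T z) = (((g (T z)).toReal : ℝ) : EReal) :=
      (EReal.coe_toReal (hfin z) (hbot _)).symm
    have hgb : g w' = (((g w').toReal : ℝ) : EReal) :=
      (EReal.coe_toReal hw' (hbot _)).symm
    set a := (g (T z)).toReal
    set b := (g w').toReal
    have hcpos : 0 < 1/(2*γ) := by positivity
    have hSpos : (0:ℝ) ≤ ‖w' - T z‖^2 := sq_nonneg _
    have step : ∀ t : ℝ, 0 < t → t ≤ 1 →
        a - (b + 2*(1/(2*γ))*(inner ℝ (T z - (z - γ • (A z + hvec))) (w' - T z) : ℝ))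
          ≤ ((1/(2*γ))*‖w' - T z‖^2) * t := by
      intro t ht ht1
      have hprox := hT z (T z + t • (w' - T z))
      have hcomb : (1-t) • (T z) + t • w' = T z + t • (w' - T z) := by
        rw [smul_sub, sub_smul, one_smul]; abel
      have hconv := hgconv (T z) w' (1-t) t (by linarith) (le_of_lt ht) (by ring)
      rw [hcomb, hga, hgb] at hconv
      have hconv' : g (T z + t • (w' - T z)) ≤ (((1-t)*a + t*b : ℝ) : EReal) := by
        rw [EReal.coe_add, EReal.coe_mul, EReal.coe_mul]; exact hconv
      rw [hga] at hprox
      have h2 : ((a + 1/(2*γ) * ‖T z - (z - γ • (A z + hvec))‖^2 : ℝ) : EReal)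
          ≤ ((((1-t)*a + t*b)
              + 1/(2*γ) * ‖T z + t • (w' - T z) - (z - γ • (A z + hvec))‖^2 : ℝ) : EReal) := by
        rw [EReal.coe_add, EReal.coe_add]
        exact le_trans hprox (add_le_add_left hconv' _)
      have h3 := EReal.coe_le_coe_iff.mp h2
      have harr : T z + t • (w' - T z) - (z - γ • (A z + hvec))
          = (T z - (z - γ • (A z + hvec))) + t • (w' - T z) := by abel
      rw [harr] at h3
      have hnorm : ‖(T z - (z - γ • (A z + hvec))) + t • (w' - T z)‖^2
          = ‖T z - (z - γ • (A z + hvec))‖^2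
            + 2*t*(inner ℝ (T z - (z - γ • (A z + hvec))) (w' - T z) : ℝ)
            + t^2*‖w' - T z‖^2 := by
        rw [norm_add_sq_real, real_inner_smul_right, norm_smul, mul_pow]
        rw [Real.norm_eq_abs, sq_abs]
        ring
      rw [hnorm] at h3
      have h4 : t * (a - (b + 2*(1/(2*γ))*(inner ℝ (T z - (z - γ • (A z + hvec))) (w' - T z) : ℝ)))
          ≤ t * (((1/(2*γ))*‖w' - T z‖^2) * t) := by nlinarith
      exact le_of_mul_le_mul_left (by linarith) ht
    have hlim := limit01 _ _ (by positivity) step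
    have h2c : 2*(1/(2*γ)) = 1/γ := by field_simp
    rw [h2c] at hlim
    linarith
  intro x y
  -- firm nonexpansiveness
  have hka := key x (T y) (hfin y)
  have hkb := key y (T x) (hfin x)
  have hsum : (0:ℝ) ≤ (inner ℝ (T x - (x - γ • (A x + hvec))) (T y - T x) : ℝ)
      + (inner ℝ (T y - (y - γ • (A y + hvec))) (T x - T y) : ℝ) := by
    have h1 : (1/γ) * (0:ℝ) ≤ (1/γ) * ((inner ℝ (T x - (x - γ • (A x + hvec))) (T y - T x) : ℝ)
        + (inner ℝ (T y - (y - γ • (A y + hvec))) (T x - T y) : ℝ)) := by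
      rw [mul_zero, mul_add]; linarith
    have := (mul_le_mul_iff_right₀ (one_div_pos.mpr hγ)).mp h1
    linarith
  have huv : (x - γ • (A x + hvec)) - (y - γ • (A y + hvec)) = (x - y) - γ • A (x - y) := by
    rw [map_sub, smul_add, smul_add, smul_sub]
    abel
  have hfirm : ‖T x - T y‖^2
      ≤ (inner ℝ (T x - T y) ((x - y) - γ • A (x - y)) : ℝ) := by
    have hid := firm_identity (T x) (T y) (x - γ • (A x + hvec)) (y - γ • (A y + hvec))
    rw [huv] at hid
    linarith
  -- the gradient difference
  have hGxy : G x - G y = γ⁻¹ • ((x - y) - (T x - T y)) - A ((x - y) - (T x - T y)) := by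
    have hRxy : R x - R y = γ⁻¹ • ((x - y) - (T x - T y)) := by
      rw [hR x, hR y, ← smul_sub]
      congr 1
      abel
    have h1 : G x - G y = (R x - R y) - γ • A (R x - R y) := by
      rw [hG x, hG y, map_sub, smul_sub]; abel
    rw [h1, hRxy, map_smul, smul_smul, mul_inv_cancel₀ (ne_of_gt hγ), one_smul]
  have hGval := inner_G_val A hsym γ (ne_of_gt hγ) (x - y) (T x - T y)
  rw [← hGxy] at hGval
  -- norm expansion of d - γ A d
  have hw2 : ‖(x - y) - γ • A (x - y)‖^2
      = ‖x - y‖^2 - 2*γ*(inner ℝ (x - y) (A (x - y)) : ℝ) + γ^2*‖A (x - y)‖^2 := by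
    rw [norm_sub_sq_real, real_inner_smul_right, norm_smul, mul_pow, Real.norm_eq_abs, sq_abs]
    ring
  -- bound P
  have hP0 : (0:ℝ) ≤ (inner ℝ (T x - T y) ((x - y) - γ • A (x - y)) : ℝ) :=
    le_trans (sq_nonneg _) hfirm
  have hcs : (inner ℝ (T x - T y) ((x - y) - γ • A (x - y)) : ℝ)
      ≤ ‖T x - T y‖ * ‖(x - y) - γ • A (x - y)‖ := real_inner_le_norm _ _
  have hPw : (inner ℝ (T x - T y) ((x - y) - γ • A (x - y)) : ℝ)
      ≤ ‖(x - y) - γ • A (x - y)‖^2 := by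
    nlinarith [norm_nonneg (T x - T y), norm_nonneg ((x - y) - γ • A (x - y)),
      sq_nonneg (‖T x - T y‖ - ‖(x - y) - γ • A (x - y)‖), hfirm, hcs]
  rw [hw2] at hPw
  have hNb := opN_bound A hsym μf Lf hμ hμL hlow hupp (x - y)
  have hest := quad_est μf Lf γ (‖x - y‖^2) (inner ℝ (x - y) (A (x - y)) : ℝ)
    (‖A (x - y)‖^2) (inner ℝ (T x - T y) ((x - y) - γ • A (x - y)) : ℝ)
    hμ hμL hLf hγ hγLf (sq_nonneg _) (hlow (x - y)) (hupp (x - y))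
    (by linarith) hP0 hPw
  rw [hGval]
  exact hest

/-- for quadratic `f(x) = (1/2)⟨x, Ax⟩ + ⟨h, x⟩` (A symmetric PSD with
spectrum bounds μ_f, L_f) and `0 < γ ≤ 1/L_f`, the FBE gradient `∇φ_γ = Q R_γ`
(with `Q = I − γA`, `R_γ(x) = (x − T_γ(x))/γ`) satisfies the strong monotonicity /
Lipschitz bounds `μ‖x−y‖² ≤ ⟨∇φ_γ(x) − ∇φ_γ(y), x − y⟩ ≤ L‖x−y‖²` with
`L = (1−γμ_f)/γ` and `μ = min{μ_f(1−γμ_f), L_f(1−γL_f)}`. -/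
theorem fbe_convex_smooth_quadratic {n : ℕ} (A : Eucl n →ₗ[ℝ] Eucl n) (hvec : Eucl n)
    (hsym : ∀ x y : Eucl n, (inner ℝ (A x) y : ℝ) = inner ℝ x (A y))
    (μf Lf : ℝ) (hμ : 0 ≤ μf) (hμL : μf ≤ Lf) (hLf : 0 < Lf)
    (hlow : ∀ x : Eucl n, μf * ‖x‖^2 ≤ (inner ℝ x (A x) : ℝ))
    (hupp : ∀ x : Eucl n, (inner ℝ x (A x) : ℝ) ≤ Lf * ‖x‖^2)
    (f : Eucl n → ℝ) (hf : ∀ x, f x = (1/2) * (inner ℝ x (A x) : ℝ) + (inner ℝ hvec x : ℝ))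
    (g : Eucl n → EReal) (hgp : ProperFun g) (hglsc : LowerSemicontinuous g)
    (hgconv : ConvexFun g)
    (γ : ℝ) (hγ : 0 < γ) (hγL : γ ≤ 1/Lf)
    (T : Eucl n → Eucl n) (hT : ∀ x, IsProx g γ (x - γ • (A x + hvec)) (T x))
    (R : Eucl n → Eucl n) (hR : ∀ x, R x = γ⁻¹ • (x - T x))
    (G : Eucl n → Eucl n) (hG : ∀ x, G x = R x - γ • A (R x)) :
    ∀ x y : Eucl n,
      min (μf*(1 - γ*μf)) (Lf*(1 - γ*Lf)) * ‖x - y‖^2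
          ≤ (inner ℝ (G x - G y) (x - y) : ℝ) ∧
      (inner ℝ (G x - G y) (x - y) : ℝ) ≤ (1 - γ*μf)/γ * ‖x - y‖^2 :=
  fbe_aux_main A hvec hsym μf Lf hμ hμL hLf hlow hupp f hf g hgp hglsc hgconv
    γ hγ hγL T hT R hR G hG
end
end
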